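/- arXiv:2210.10297 — 6 statements merged into one kernel-verified Lean document; each statement's English description precedes it below -/
import Mathlib

section
/- Let V ∈ ℝ^{n×k} (n ≥ k) have columns of unit 2-norm, and let ν = ‖SUT(I_k − VᵀV)‖₂ where SUT denotes the strictly upper triangular part. Then the largest singular value of V satisfies σ₁(V) ≤ 1 + ν. -/
open scoped Matrix.Norms.L2Operator
open Matrix

/-- The strictly upper triangular part of a square matrix. -/
def SUT {k : ℕ} (M : Matrix (Fin k) (Fin k) ℝ) : Matrix (Fin k) (Fin k) ℝ :=
  Matrix.of fun i j => if i < j then M i j else 0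

/-!
Since the columns of `V` are unit vectors, `E = I - VᵀV` is symmetric with zero diagonal, so
`E = SUT E + (SUT E)ᵀ` and `‖E‖ ≤ 2ν`. Hence `‖V‖² = ‖VᵀV‖ ≤ ‖I‖ + ‖E‖ ≤ 1 + 2ν ≤ (1 + ν)²`.
-/

namespace Matrix

lemma l2_opNorm_transpose_real {m n : Type*} [Fintype m] [Fintype n] [DecidableEq m]
    [DecidableEq n] (A : Matrix m n ℝ) : ‖Aᵀ‖ = ‖A‖ := by
  rw [← conjTranspose_eq_transpose_of_trivial, l2_opNorm_conjTranspose]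

lemma l2_opNorm_one_le {n : Type*} [Fintype n] [DecidableEq n] :
    ‖(1 : Matrix n n ℝ)‖ ≤ 1 := by
  rw [cstar_norm_def, _root_.map_one]
  exact ContinuousLinearMap.norm_id_le

lemma l2_opNorm_mul_self_le_one_add {m n : Type*} [Fintype m] [Fintype n] [DecidableEq n]
    (V : Matrix m n ℝ) : ‖V‖ * ‖V‖ ≤ 1 + ‖1 - Vᵀ * V‖ := by
  rw [← l2_opNorm_conjTranspose_mul_self, conjTranspose_eq_transpose_of_trivial]
  calc ‖Vᵀ * V‖ = ‖1 - (1 - Vᵀ * V)‖ := by rw [sub_sub_cancel]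
    _ ≤ ‖(1 : Matrix n n ℝ)‖ + ‖1 - Vᵀ * V‖ := norm_sub_le _ _
    _ ≤ 1 + ‖1 - Vᵀ * V‖ := by gcongr; exact l2_opNorm_one_le

lemma isSymm_one_sub_transpose_mul_self {m n : Type*} [Fintype m] [DecidableEq n]
    (V : Matrix m n ℝ) : (1 - Vᵀ * V).IsSymm := by
  simp only [IsSymm, transpose_sub, transpose_one, transpose_mul, transpose_transpose]

lemma one_sub_transpose_mul_self_apply_self {m n : Type*} [Fintype m] [DecidableEq n]
    {V : Matrix m n ℝ} (hcols : ∀ j, ∑ i, V i j ^ 2 = 1) (j : n) :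
    ((1 : Matrix n n ℝ) - Vᵀ * V) j j = 0 := by
  simp [mul_apply, ← pow_two, hcols j]

end Matrix

lemma SUT_add_transpose_SUT {k : ℕ} {A : Matrix (Fin k) (Fin k) ℝ} (hA : A.IsSymm)
    (hdiag : ∀ i, A i i = 0) : SUT A + (SUT A)ᵀ = A := by
  ext i j
  simp only [SUT, Matrix.add_apply, transpose_apply, of_apply]
  rcases lt_trichotomy i j with h | rfl | h
  · simp [h, h.not_gt]
  · simp [hdiag]
  · simp [h, h.not_gt, ← hA.apply i j]

lemma l2_opNorm_le_two_mul_SUT {k : ℕ} {A : Matrix (Fin k) (Fin k) ℝ} (hA : A.IsSymm)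
    (hdiag : ∀ i, A i i = 0) : ‖A‖ ≤ 2 * ‖SUT A‖ := by
  calc ‖A‖ = ‖SUT A + (SUT A)ᵀ‖ := by rw [SUT_add_transpose_SUT hA hdiag]
    _ ≤ ‖SUT A‖ + ‖(SUT A)ᵀ‖ := norm_add_le _ _
    _ = 2 * ‖SUT A‖ := by rw [l2_opNorm_transpose_real]; ring

theorem stmt0_general {n k : ℕ} (V : Matrix (Fin n) (Fin k) ℝ)
    (hcols : ∀ j, ∑ i, (V i j) ^ 2 = 1)
    (ν : ℝ) (hν : ν = ‖SUT (1 - Vᵀ * V)‖) :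
    ‖V‖ ≤ 1 + ν := by
  have hE : ‖1 - Vᵀ * V‖ ≤ 2 * ν := hν ▸ l2_opNorm_le_two_mul_SUT
    (isSymm_one_sub_transpose_mul_self V) (one_sub_transpose_mul_self_apply_self hcols)
  have hν0 : 0 ≤ ν := hν ▸ norm_nonneg _
  nlinarith [norm_nonneg V, l2_opNorm_mul_self_le_one_add V]

/-- If `V ∈ ℝ^{n×k}` (`n ≥ k`) has unit 2-norm columns and
`ν = ‖SUT(I − VᵀV)‖₂`, then the largest singular value of `V`
(i.e. its spectral norm) satisfies `σ₁(V) ≤ 1 + ν`. -/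
theorem stmt0 {n k : ℕ} (hnk : k ≤ n) (V : Matrix (Fin n) (Fin k) ℝ)
    (hcols : ∀ j, ∑ i, (V i j) ^ 2 = 1)
    (ν : ℝ) (hν : ν = ‖SUT (1 - Vᵀ * V)‖) :
    ‖V‖ ≤ 1 + ν :=
  stmt0_general V hcols ν hν
end

section
/- Let Q_l = (q₁,…,q_l) ∈ ℝ^{r×l} (r ≥ l ≥ 1) have unit-norm columns, M_l = SUT(Q_lᵀQ_l), and assume I_l + M_l is invertible with S_l = (I_l + M_l)^{-1} M_l. For j = 1,…,l define Householder matrices W_j = I_{r+l} − w_j w_jᵀ with w_j = (−e_j^{(l)}; q_j) ∈ ℝ^{r+l}. Then the product W₁⋯W_l, partitioned into blocks of sizes l and r, equals [[S_l, (I_l − S_l)Q_lᵀ], [Q_l(I_l − S_l), I_r − Q_l(I_l − S_l)Q_lᵀ]]. -/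
open scoped Matrix.Norms.L2Operator
open Matrix

/-!
Write `V` for the matrix with columns `w_j`, so that `W_j = I - V E_jj Vᵀ` and
`VᵀV = I + QᵀQ`. By induction on `k`, with `U = SUT(VᵀV)` and `D_k` the diagonal projection
onto the first `k` coordinates, `W_1 ⋯ W_k = I - V (I + U)⁻¹ D_k Vᵀ`: the induction step
only needs that the `k`-th column of `U` is the `k`-th column of `VᵀV` cut off by `D_k`.
At `k = l` this is the compact WY form `I - V (I + M)⁻¹ Vᵀ`, and `(I + M)⁻¹ = I - S`;
expanding in blocks gives the theorem.
-/

def leadingDiag (l k : ℕ) : Matrix (Fin l) (Fin l) ℝ :=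
  diagonal fun j => if (j : ℕ) < k then 1 else 0

lemma leadingDiag_succ {l : ℕ} (k : Fin l) :
    leadingDiag l (k + 1) = leadingDiag l k + single k k 1 := by
  ext i j
  simp only [leadingDiag, Matrix.add_apply, diagonal_apply, Matrix.single_apply]
  split_ifs <;> simp_all [Fin.ext_iff] <;> omega

lemma SUT_one_add {l : ℕ} (A : Matrix (Fin l) (Fin l) ℝ) : SUT (1 + A) = SUT A := by
  ext i j
  by_cases h : i < j
  · simp [SUT, h, h.ne]
  · simp [SUT, h]

lemma SUT_mul_single {l : ℕ} (A : Matrix (Fin l) (Fin l) ℝ) (k : Fin l) :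
    SUT A * single k k 1 = leadingDiag l k * A * single k k 1 := by
  ext i j
  by_cases hj : j = k
  · subst hj
    simp [SUT, leadingDiag]
  · simp [hj]

lemma isUnit_one_add_SUT {l : ℕ} (A : Matrix (Fin l) (Fin l) ℝ) : IsUnit (1 + SUT A) := by
  rw [isUnit_iff_isUnit_det, det_of_isUpperTriangular]
  · simp [SUT]
  · intro i j (hji : j < i)
    simp [SUT, one_apply, hji.ne', hji.not_gt]

lemma vecMulVec_transpose_apply_self {m n : Type*} [Fintype n] [DecidableEq n]
    (V : Matrix m n ℝ) (j : n) :
    vecMulVec (Vᵀ j) (Vᵀ j) = V * single j j (1 : ℝ) * Vᵀ := by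
  ext x y
  simp [vecMulVec_apply, mul_apply, Matrix.single_apply, ite_and]

lemma inv_one_add_mul_self {n R : Type*} [Fintype n] [DecidableEq n] [CommRing R]
    (U : Matrix n n R) (h : IsUnit (1 + U)) : (1 + U)⁻¹ * U = 1 - (1 + U)⁻¹ := by
  rw [eq_sub_iff_add_eq, ← mul_add_one, add_comm U,
    nonsing_inv_mul _ ((isUnit_iff_isUnit_det _).mp h)]

section CompactWY

variable {m : Type*} [Fintype m] [DecidableEq m] {l : ℕ}

lemma householder_mul_step (V : Matrix m (Fin l) ℝ) (j : Fin l) :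
    (1 - V * (1 + SUT (Vᵀ * V))⁻¹ * leadingDiag l j * Vᵀ) * (1 - vecMulVec (Vᵀ j) (Vᵀ j)) =
      1 - V * (1 + SUT (Vᵀ * V))⁻¹ * leadingDiag l (j + 1) * Vᵀ := by
  set N := (1 + SUT (Vᵀ * V))⁻¹
  have hNU : N * SUT (Vᵀ * V) = 1 - N := inv_one_add_mul_self _ (isUnit_one_add_SUT _)
  rw [vecMulVec_transpose_apply_self, leadingDiag_succ]
  calc (1 - V * N * leadingDiag l j * Vᵀ) * (1 - V * single j j (1 : ℝ) * Vᵀ)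
      = 1 - V * N * leadingDiag l j * Vᵀ - V * single j j (1 : ℝ) * Vᵀ
          + V * (N * (leadingDiag l j * (Vᵀ * V) * single j j (1 : ℝ))) * Vᵀ := by
        simp only [Matrix.sub_mul, Matrix.mul_sub, Matrix.one_mul, Matrix.mul_one,
          Matrix.mul_assoc]
        abel
    _ = 1 - V * N * (leadingDiag l j + single j j (1 : ℝ)) * Vᵀ := by
        rw [← SUT_mul_single, ← mul_assoc, hNU]
        simp only [Matrix.sub_mul, Matrix.mul_sub, Matrix.mul_add, Matrix.add_mul,
          Matrix.one_mul, Matrix.mul_assoc]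
        abel

theorem prod_take_householder (V : Matrix m (Fin l) ℝ) {k : ℕ} (hk : k ≤ l) :
    (((List.finRange l).take k).map fun j => 1 - vecMulVec (Vᵀ j) (Vᵀ j)).prod =
      1 - V * (1 + SUT (Vᵀ * V))⁻¹ * leadingDiag l k * Vᵀ := by
  induction k with
  | zero => simp [leadingDiag]
  | succ k ih =>
    rw [List.map_take, List.prod_take_succ _ _ (by simpa using hk), ← List.map_take,
      ih (Nat.le_of_succ_le hk)]
    simp only [List.getElem_map, List.getElem_finRange]
    exact householder_mul_step V ⟨k, hk⟩

theorem prod_householder (V : Matrix m (Fin l) ℝ) :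
    ((List.finRange l).map fun j => 1 - vecMulVec (Vᵀ j) (Vᵀ j)).prod =
      1 - V * (1 + SUT (Vᵀ * V))⁻¹ * Vᵀ := by
  have hD : leadingDiag l l = 1 := by simp [leadingDiag]
  have h := prod_take_householder V le_rfl
  rwa [List.take_of_length_le (by simp), hD, Matrix.mul_one] at h

end CompactWY

lemma one_sub_fromRows_neg_one_mul_mul_transpose {R m n : Type*} [Fintype m] [DecidableEq m]
    [Fintype n] [DecidableEq n] [CommRing R] (Q : Matrix n m R) (T : Matrix m m R) :
    1 - fromRows (-1) Q * T * (fromRows (-1) Q)ᵀ =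
      fromBlocks (1 - T) (T * Qᵀ) (Q * T) (1 - Q * T * Qᵀ) := by
  rw [transpose_fromRows, fromRows_mul, fromRows_mul_fromCols, ← fromBlocks_one,
    sub_eq_add_neg, fromBlocks_neg, fromBlocks_add]
  simp [sub_eq_add_neg]

theorem stmt4_general {r l : ℕ}
    (Q : Matrix (Fin r) (Fin l) ℝ)
    (M : Matrix (Fin l) (Fin l) ℝ) (hM : M = SUT (Qᵀ * Q))
    (S : Matrix (Fin l) (Fin l) ℝ) (hS : S = (1 + M)⁻¹ * M)
    (w : Fin l → (Fin l ⊕ Fin r → ℝ))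
    (hw : ∀ j, w j = Sum.elim (-(Pi.single j 1)) (fun i => Q i j))
    (W : Fin l → Matrix (Fin l ⊕ Fin r) (Fin l ⊕ Fin r) ℝ)
    (hW : ∀ j, W j = 1 - Matrix.vecMulVec (w j) (w j)) :
    ((List.finRange l).map W).prod =
      Matrix.fromBlocks S ((1 - S) * Qᵀ) (Q * (1 - S)) (1 - Q * (1 - S) * Qᵀ) := by
  set V : Matrix (Fin l ⊕ Fin r) (Fin l) ℝ := fromRows (-1) Q
  have hWV : W = fun j => 1 - vecMulVec (Vᵀ j) (Vᵀ j) := by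
    funext j
    have hwj : w j = Vᵀ j := by
      ext (i | i) <;> simp [hw, V, Pi.single_apply, one_apply, eq_comm]
    rw [hW, hwj]
  have hU : SUT (Vᵀ * V) = M := by
    simp [V, transpose_fromRows, fromCols_mul_fromRows, SUT_one_add, hM]
  have h1S : (1 + M)⁻¹ = 1 - S := by
    rw [hS, inv_one_add_mul_self _ (hM ▸ isUnit_one_add_SUT _), sub_sub_cancel]
  rw [hWV, prod_householder, hU, h1S, one_sub_fromRows_neg_one_mul_mul_transpose, sub_sub_cancel]

/-- Björck–Paige structural theorem: the ordered product `W₁⋯W_l` of the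
Householder reflections built from the augmented columns of `Q_l` has the
block form `[[S, (I−S)Qᵀ], [Q(I−S), I − Q(I−S)Qᵀ]]` where
`S = (I+M)⁻¹M`, `M = SUT(QᵀQ)`. -/
theorem stmt4 {r l : ℕ} (hl : 1 ≤ l) (hrl : l ≤ r)
    (Q : Matrix (Fin r) (Fin l) ℝ) (hQ : ∀ j, ∑ i, (Q i j) ^ 2 = 1)
    (M : Matrix (Fin l) (Fin l) ℝ) (hM : M = SUT (Qᵀ * Q))
    (hinv : IsUnit (1 + M))
    (S : Matrix (Fin l) (Fin l) ℝ) (hS : S = (1 + M)⁻¹ * M)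
    (w : Fin l → (Fin l ⊕ Fin r → ℝ))
    (hw : ∀ j, w j = Sum.elim (-(Pi.single j 1)) (fun i => Q i j))
    (W : Fin l → Matrix (Fin l ⊕ Fin r) (Fin l ⊕ Fin r) ℝ)
    (hW : ∀ j, W j = 1 - Matrix.vecMulVec (w j) (w j)) :
    ((List.finRange l).map W).prod =
      Matrix.fromBlocks S ((1 - S) * Qᵀ) (Q * (1 - S)) (1 - Q * (1 - S) * Qᵀ) :=
  stmt4_general Q M hM S hS w hw W hW
end

section
/- With the notation of the Björck–Paige structural theorem, let M_l = SUT(Q_lᵀQ_lᵀ) be the strictly upper triangular part of Q_lᵀQ_l (where Q_l has unit columns) and S_l = (I + M_l)^{-1} M_l. Then ‖S_l‖₂ ≤ 1 and ‖M_l‖₂/(1 + ‖M_l‖₂) ≤ ‖S_l‖₂ ≤ 2‖M_l‖₂. -/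
open scoped Matrix.Norms.L2Operator
open Matrix

namespace Matrix

section OneAdd

variable {n R : Type*} [Fintype n] [DecidableEq n] [CommRing R]

theorem dotProduct_one_add_add_transpose_mulVec (M : Matrix n n R) (v : n → R) :
    v ⬝ᵥ ((1 + M + Mᵀ) *ᵥ v) = ((1 + M) *ᵥ v) ⬝ᵥ ((1 + M) *ᵥ v) - (M *ᵥ v) ⬝ᵥ (M *ᵥ v) := by
  have hT : v ⬝ᵥ (Mᵀ *ᵥ v) = (M *ᵥ v) ⬝ᵥ v := by
    rw [dotProduct_mulVec, vecMul_transpose, dotProduct_comm]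
  simp only [add_mulVec, one_mulVec, dotProduct_add, add_dotProduct, hT, dotProduct_comm v (M *ᵥ v)]
  ring

theorem inv_one_add_mul_comm {M : Matrix n n R} (hM : IsUnit (1 + M).det) :
    (1 + M)⁻¹ * M = M * (1 + M)⁻¹ := by
  have hl : (1 + M)⁻¹ * M = 1 - (1 + M)⁻¹ := by
    rw [eq_sub_iff_add_eq, ← mul_add_one, add_comm M, nonsing_inv_mul _ hM]
  have hr : M * (1 + M)⁻¹ = 1 - (1 + M)⁻¹ := by
    rw [eq_sub_iff_add_eq, ← add_one_mul, add_comm M, mul_nonsing_inv _ hM]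
  rw [hl, hr]

end OneAdd

section L2

variable {n : Type*} [Fintype n] [DecidableEq n]

theorem norm_toEuclideanCLM_sq (A : Matrix n n ℝ) (x : EuclideanSpace ℝ n) :
    ‖toEuclideanCLM (𝕜 := ℝ) A x‖ ^ 2 = (A *ᵥ x.ofLp) ⬝ᵥ (A *ᵥ x.ofLp) := by
  rw [← real_inner_self_eq_norm_sq, EuclideanSpace.inner_eq_star_dotProduct]
  rfl

theorem norm_toEuclideanCLM_le_one_add {M : Matrix n n ℝ} (hM : (1 + M + Mᵀ).PosSemidef)
    (x : EuclideanSpace ℝ n) :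
    ‖toEuclideanCLM (𝕜 := ℝ) M x‖ ≤ ‖toEuclideanCLM (𝕜 := ℝ) (1 + M) x‖ := by
  refine pow_le_pow_iff_left₀ (norm_nonneg _) (norm_nonneg _) two_ne_zero |>.mp ?_
  have hx := hM.dotProduct_mulVec_nonneg x.ofLp
  rw [star_trivial, dotProduct_one_add_add_transpose_mulVec] at hx
  rw [norm_toEuclideanCLM_sq, norm_toEuclideanCLM_sq]
  linarith

theorem l2_opNorm_mul_inv_one_add_le_one {M : Matrix n n ℝ} (hM : (1 + M + Mᵀ).PosSemidef)
    (hu : IsUnit (1 + M).det) : ‖M * (1 + M)⁻¹‖ ≤ 1 := by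
  rw [cstar_norm_def]
  refine ContinuousLinearMap.opNorm_le_bound _ zero_le_one fun x => ?_
  set y := toEuclideanCLM (𝕜 := ℝ) (1 + M)⁻¹ x
  have hy : toEuclideanCLM (𝕜 := ℝ) (1 + M) y = x := by
    have h := congrArg (toEuclideanCLM (n := n) (𝕜 := ℝ) · x) (mul_nonsing_inv _ hu)
    simpa [map_mul] using h
  calc ‖toEuclideanCLM (𝕜 := ℝ) (M * (1 + M)⁻¹) x‖ = ‖toEuclideanCLM (𝕜 := ℝ) M y‖ := by
        rw [map_mul]; rfl
    _ ≤ ‖toEuclideanCLM (𝕜 := ℝ) (1 + M) y‖ := norm_toEuclideanCLM_le_one_add hM y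
    _ = 1 * ‖x‖ := by rw [hy, one_mul]

end L2

end Matrix

section NormedRing

variable {R : Type*} [SeminormedRing R] {M S : R}

theorem norm_div_one_add_norm_le_of_mul_one_add_eq (h : S * (1 + M) = M) :
    ‖M‖ / (1 + ‖M‖) ≤ ‖S‖ := by
  have hM : M = S + S * M := by rw [← mul_one_add, h]
  rw [div_le_iff₀ (by positivity)]
  calc ‖M‖ = ‖S + S * M‖ := congrArg norm hM
    _ ≤ ‖S‖ + ‖S‖ * ‖M‖ := (norm_add_le _ _).trans (by gcongr; exact norm_mul_le _ _)
    _ = ‖S‖ * (1 + ‖M‖) := by ring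

theorem norm_le_two_mul_of_one_add_mul_eq (h : (1 + M) * S = M) (hS : ‖S‖ ≤ 1) :
    ‖S‖ ≤ 2 * ‖M‖ := by
  have hS' : S = M - M * S := by rw [eq_sub_iff_add_eq, ← one_add_mul, h]
  calc ‖S‖ = ‖M - M * S‖ := congrArg norm hS'
    _ ≤ ‖M‖ + ‖M‖ * ‖S‖ := (norm_sub_le _ _).trans (by gcongr; exact norm_mul_le _ _)
    _ ≤ 2 * ‖M‖ := by nlinarith [norm_nonneg M]

end NormedRing

section SUT

variable {k : ℕ}

theorem SUT_apply_of_le (A : Matrix (Fin k) (Fin k) ℝ) {i j : Fin k} (h : j ≤ i) :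
    SUT A i j = 0 := by
  simp [SUT, not_lt.mpr h]

theorem det_one_add_SUT (A : Matrix (Fin k) (Fin k) ℝ) : (1 + SUT A).det = 1 := by
  have hT : (1 + SUT A).IsUpperTriangular := fun i j (hij : j < i) => by
    rw [Matrix.add_apply, one_apply_ne hij.ne', SUT_apply_of_le A hij.le, add_zero]
  simp [det_of_isUpperTriangular hT, SUT_apply_of_le]

theorem one_add_SUT_add_transpose {A : Matrix (Fin k) (Fin k) ℝ} (hA : Aᵀ = A)
    (hdiag : ∀ i, A i i = 1) : 1 + SUT A + (SUT A)ᵀ = A := by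
  ext i j
  rcases lt_trichotomy i j with h | rfl | h
  · simp [SUT, h, h.ne, not_lt.mpr h.le]
  · simp [SUT, hdiag]
  · simpa [SUT, h, h.ne', not_lt.mpr h.le] using congrFun (congrFun hA i) j

end SUT

theorem stmt5_general {r l : ℕ}
    (Q : Matrix (Fin r) (Fin l) ℝ) (hQ : ∀ j, ∑ i, (Q i j) ^ 2 = 1)
    (M : Matrix (Fin l) (Fin l) ℝ) (hM : M = SUT (Qᵀ * Q))
    (S : Matrix (Fin l) (Fin l) ℝ) (hS : S = (1 + M)⁻¹ * M) :
    ‖S‖ ≤ 1 ∧ ‖M‖ / (1 + ‖M‖) ≤ ‖S‖ ∧ ‖S‖ ≤ 2 * ‖M‖ := by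
  have hu : IsUnit (1 + M).det := by rw [hM, det_one_add_SUT]; exact isUnit_one
  have hGram : 1 + M + Mᵀ = Qᵀ * Q := by
    refine hM ▸ one_add_SUT_add_transpose (by simp) fun j => ?_
    simpa [mul_apply, sq] using hQ j
  have hPSD : (1 + M + Mᵀ).PosSemidef := by
    simpa [hGram, conjTranspose_eq_transpose_of_trivial] using posSemidef_conjTranspose_mul_self Q
  have hS' : S = M * (1 + M)⁻¹ := hS.trans (inv_one_add_mul_comm hu)
  have hS1 : ‖S‖ ≤ 1 := hS' ▸ l2_opNorm_mul_inv_one_add_le_one hPSD hu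
  refine ⟨hS1, norm_div_one_add_norm_le_of_mul_one_add_eq ?_,
    norm_le_two_mul_of_one_add_mul_eq ?_ hS1⟩
  · rw [hS', nonsing_inv_mul_cancel_right _ _ hu]
  · rw [hS, mul_nonsing_inv_cancel_left _ _ hu]

/-- For `M = SUT(QᵀQ)` (Q with unit columns) and `S = (I+M)⁻¹M`, one has
`‖S‖₂ ≤ 1` and `‖M‖₂/(1+‖M‖₂) ≤ ‖S‖₂ ≤ 2‖M‖₂`. -/
theorem stmt5 {r l : ℕ} (hl : 1 ≤ l) (hrl : l ≤ r)
    (Q : Matrix (Fin r) (Fin l) ℝ) (hQ : ∀ j, ∑ i, (Q i j) ^ 2 = 1)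
    (M : Matrix (Fin l) (Fin l) ℝ) (hM : M = SUT (Qᵀ * Q))
    (S : Matrix (Fin l) (Fin l) ℝ) (hS : S = (1 + M)⁻¹ * M) :
    ‖S‖ ≤ 1 ∧ ‖M‖ / (1 + ‖M‖) ≤ ‖S‖ ∧ ‖S‖ ≤ 2 * ‖M‖ :=
  stmt5_general Q hQ M hM S hS
end

section
/- Let C ∈ ℝ^{r×l}, r ≥ l, have full column rank with compact QR factorization C = QR produced by Gram–Schmidt, where Q = (q₁,…,q_l) has orthonormal columns and R is upper triangular with positive diagonal. Define Householder reflections W_j = I_{r+l} − w_j w_jᵀ with w_j = (−e_j^{(l)}; q_j). Then (W_l⋯W₁) · [[O_{l×l}],[C]] = [[R],[O_{r×l}]]. -/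
/-!
Write `P_s` for the coordinate projection onto a set `s` of column indices and consider the
stacked matrix `(P_s R; Q (1 - P_s) R)`. For `s = ∅` it is `(0; C)`, for `s = univ` it is `(R; 0)`.
If `j ∉ s`, then `w_jᵀ` applied to it gives `-(P_s R)_j + q_jᵀ Q (1 - P_s) R = R_j`, because row `j`
of `P_s` vanishes and `QᵀQ = 1`; hence `W_j` subtracts `w_j R_j`, which moves row `R_j` to the top
block and removes `q_j R_j` from the bottom one, i.e. it adds `j` to `s`.
-/

open Matrix

namespace GramSchmidtHouseholder

variable {α m n ι : Type*} [CommRing α]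

lemma fromRows_sub {m₁ m₂ : Type*} (A₁ B₁ : Matrix m₁ ι α) (A₂ B₂ : Matrix m₂ ι α) :
    fromRows A₁ A₂ - fromRows B₁ B₂ = fromRows (A₁ - B₁) (A₂ - B₂) := by
  ext (_ | _) _ <;> rfl

lemma vecMulVec_sumElim {m₁ m₂ : Type*} (a : m₁ → α) (b : m₂ → α) (v : ι → α) :
    vecMulVec (Sum.elim a b) v = fromRows (vecMulVec a v) (vecMulVec b v) := by
  ext (_ | _) _ <;> rfl

section

variable [Fintype n] [DecidableEq n]

lemma single_one_mul (R : Matrix n ι α) (j : n) :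
    single j j (1 : α) * R = vecMulVec (Pi.single j 1) (R.row j) := by
  rw [single_eq_single_vecMulVec_single, vecMulVec_mul, single_one_vecMul]

def coordProj (s : Finset n) : Matrix n n α := ∑ i ∈ s, single i i 1

lemma single_vecMul_coordProj_of_notMem {s : Finset n} {j : n} (hj : j ∉ s) :
    Pi.single j 1 ᵥ* (coordProj s : Matrix n n α) = 0 := by
  ext k
  simp only [coordProj, single_one_vecMul, row_apply, Matrix.sum_apply, Pi.zero_apply]
  exact Finset.sum_eq_zero fun i hi => single_apply_of_row_ne (by rintro rfl; exact hj hi) _ _ _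

/-- The matrix reached from `(0; QR)` after applying the reflections with indices in `s`. -/
def stage (Q : Matrix m n α) (R : Matrix n ι α) (s : Finset n) : Matrix (n ⊕ m) ι α :=
  fromRows ((coordProj s : Matrix n n α) * R) (Q * (1 - coordProj s : Matrix n n α) * R)

lemma stage_empty (Q : Matrix m n α) (R : Matrix n ι α) :
    stage Q R ∅ = fromRows 0 (Q * R) := by
  simp [stage, coordProj]

lemma stage_univ (Q : Matrix m n α) (R : Matrix n ι α) :
    stage Q R Finset.univ = fromRows R 0 := by
  simp [stage, coordProj, sum_single_one]

def reflectorVec (Q : Matrix m n α) (j : n) : n ⊕ m → α :=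
  Sum.elim (-Pi.single j 1) (Q.col j)

variable [Fintype m]

lemma reflectorVec_vecMul_stage {Q : Matrix m n α} (hQ : Qᵀ * Q = 1) (R : Matrix n ι α)
    {s : Finset n} {j : n} (hj : j ∉ s) :
    reflectorVec Q j ᵥ* stage Q R s = R.row j := by
  have hcol : Q.col j = Pi.single j 1 ᵥ* Qᵀ := by rw [single_one_vecMul]; rfl
  rw [stage, reflectorVec, sumElim_vecMul_fromRows, neg_vecMul, ← vecMul_vecMul,
    single_vecMul_coordProj_of_notMem hj, zero_vecMul, neg_zero, zero_add, hcol, vecMul_vecMul,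
    ← Matrix.mul_assoc, ← Matrix.mul_assoc, hQ, Matrix.one_mul, ← vecMul_vecMul, vecMul_sub,
    single_vecMul_coordProj_of_notMem hj, vecMul_one, sub_zero, single_one_vecMul]

variable [DecidableEq m]

def reflector (Q : Matrix m n α) (j : n) : Matrix (n ⊕ m) (n ⊕ m) α :=
  1 - vecMulVec (reflectorVec Q j) (reflectorVec Q j)

lemma reflector_mul_stage {Q : Matrix m n α} (hQ : Qᵀ * Q = 1) (R : Matrix n ι α)
    {s : Finset n} {j : n} (hj : j ∉ s) :
    reflector Q j * stage Q R s = stage Q R (insert j s) := by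
  rw [reflector, Matrix.sub_mul, Matrix.one_mul, vecMulVec_mul,
    reflectorVec_vecMul_stage hQ R hj, reflectorVec, vecMulVec_sumElim, stage, stage,
    fromRows_sub, coordProj, coordProj, Finset.sum_insert hj, neg_vecMulVec, sub_neg_eq_add]
  congr 1
  · rw [Matrix.add_mul, single_one_mul, add_comm]
  · rw [← mulVec_single_one, ← mul_vecMulVec, ← single_one_mul, ← Matrix.mul_assoc]
    simp only [Matrix.mul_sub, Matrix.sub_mul, Matrix.mul_add, Matrix.add_mul]
    abel

lemma list_prod_reflector_mul_stage_empty {Q : Matrix m n α} (hQ : Qᵀ * Q = 1)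
    (R : Matrix n ι α) {L : List n} (hL : L.Nodup) :
    (L.map (reflector Q)).prod * stage Q R ∅ = stage Q R L.toFinset := by
  induction L with
  | nil => simp
  | cons j L ih =>
    rw [List.nodup_cons] at hL
    rw [List.map_cons, List.prod_cons, Matrix.mul_assoc, ih hL.2, List.toFinset_cons,
      reflector_mul_stage hQ R (by simpa using hL.1)]

end

end GramSchmidtHouseholder

theorem stmt6_general {r l : ℕ}
    (C Q : Matrix (Fin r) (Fin l) ℝ) (hQ : Qᵀ * Q = 1)
    (R : Matrix (Fin l) (Fin l) ℝ)
    (hQR : C = Q * R)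
    (w : Fin l → (Fin l ⊕ Fin r → ℝ))
    (hw : ∀ j, w j = Sum.elim (-(Pi.single j 1)) (fun i => Q i j))
    (W : Fin l → Matrix (Fin l ⊕ Fin r) (Fin l ⊕ Fin r) ℝ)
    (hW : ∀ j, W j = 1 - Matrix.vecMulVec (w j) (w j)) :
    ((List.finRange l).reverse.map W).prod *
        Matrix.fromRows (0 : Matrix (Fin l) (Fin l) ℝ) C =
      Matrix.fromRows R (0 : Matrix (Fin r) (Fin l) ℝ) := by
  have hWQ : W = GramSchmidtHouseholder.reflector Q := funext fun j => by rw [hW, hw]; rfl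
  have h := GramSchmidtHouseholder.list_prod_reflector_mul_stage_empty hQ R
    (List.nodup_reverse.mpr (List.nodup_finRange l))
  rwa [List.toFinset_reverse, List.toFinset_finRange, GramSchmidtHouseholder.stage_empty,
    GramSchmidtHouseholder.stage_univ, ← hQR, ← hWQ] at h

/-- Equivalence of Gram–Schmidt QR of `C` and Householder QR of the augmented
matrix `(O; C)`: with `W_j = I − w_jw_jᵀ`, `w_j = (−e_j; q_j)`, one has
`(W_l⋯W₁)·[[0],[C]] = [[R],[0]]`. -/
theorem stmt6 {r l : ℕ} (hrl : l ≤ r)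
    (C Q : Matrix (Fin r) (Fin l) ℝ) (hQ : Qᵀ * Q = 1)
    (R : Matrix (Fin l) (Fin l) ℝ)
    (hR : ∀ i j : Fin l, j < i → R i j = 0) (hRd : ∀ i, 0 < R i i)
    (hQR : C = Q * R)
    (w : Fin l → (Fin l ⊕ Fin r → ℝ))
    (hw : ∀ j, w j = Sum.elim (-(Pi.single j 1)) (fun i => Q i j))
    (W : Fin l → Matrix (Fin l ⊕ Fin r) (Fin l ⊕ Fin r) ℝ)
    (hW : ∀ j, W j = 1 - Matrix.vecMulVec (w j) (w j)) :
    ((List.finRange l).reverse.map W).prod *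
        Matrix.fromRows (0 : Matrix (Fin l) (Fin l) ℝ) C =
      Matrix.fromRows R (0 : Matrix (Fin r) (Fin l) ℝ) :=
  stmt6_general C Q hQ R hQR w hw W hW
end

section
/- Let the exact k-step Lanczos bidiagonalization of A with starting vector b produce orthonormal U_{k+1} = (u₁,…,u_{k+1}), V_k, and lower bidiagonal B_k ∈ ℝ^{(k+1)×k}. Define Householder reflections P̂_i = I_{m+n+1} − p̂_i p̂_iᵀ with p̂_i = (−e_i^{(n+1)}; u_i) ∈ ℝ^{m+n+1}, i = 1,…,k+1. Then (stacking a zero block of n+1 rows on top of AV_k) it holds that [[O_{(n+1)×k}],[AV_k]] = P̂₁⋯P̂_{k+1} [[B_k],[O_{(m+n−k)×k}]]. -/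
/-!
Write `E = [I; 0]` and `W = [0; U]`, so that `p̂ᵢ = wᵢ - eᵢ` for their `i`-th columns. All the
columns `eⱼ`, `wⱼ` are orthonormal, hence `P̂ᵢ` swaps `eᵢ` and `wᵢ` and fixes `eⱼ`, `wⱼ` for
`j ≠ i`. Reading `P̂₁⋯P̂_{k+1} eⱼ` from the right, `eⱼ` is fixed until `P̂ⱼ` sends it to `wⱼ`,
which the remaining factors fix; so `P̂₁⋯P̂_{k+1} E` and `W` agree in the columns `j ≤ k`.
The rows `j > k` of `B_k` vanish, hence
`P̂₁⋯P̂_{k+1} [B_k; 0] = P̂₁⋯P̂_{k+1} E B_k = W B_k = [0; U B_k] = [0; AV_k]`.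
-/

open Matrix

namespace Matrix

variable {R ι κ ν : Type*} [CommRing R]

theorem mul_eq_mul_of_col_eq_or_row_eq_zero [Fintype κ] {X Y : Matrix ν κ R} {M : Matrix κ ι R}
    (h : ∀ j, Xᵀ j = Yᵀ j ∨ M j = 0) : X * M = Y * M := by
  ext r c
  simp only [mul_apply]
  refine Finset.sum_congr rfl fun j _ => ?_
  rcases h j with h | h
  · rw [show X r j = Y r j from congrFun h r]
  · rw [show M j c = 0 from congrFun h c, mul_zero, mul_zero]

variable [Fintype ι]

theorem transpose_dotProduct_transpose (M : Matrix ι κ R) (N : Matrix ι ν R) (i : κ) (j : ν) :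
    Mᵀ i ⬝ᵥ Nᵀ j = (Mᵀ * N) i j :=
  rfl

variable [DecidableEq ι]

theorem one_sub_vecMulVec_self_mulVec (p x : ι → R) :
    (1 - vecMulVec p p) *ᵥ x = x - (p ⬝ᵥ x) • p := by
  rw [sub_mulVec, one_mulVec, vecMulVec_mulVec, op_smul_eq_smul]

theorem one_sub_vecMulVec_self_mulVec_of_dotProduct_eq_zero {p x : ι → R} (h : p ⬝ᵥ x = 0) :
    (1 - vecMulVec p p) *ᵥ x = x := by
  rw [one_sub_vecMulVec_self_mulVec, h, zero_smul, sub_zero]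

theorem one_sub_vecMulVec_sub_mulVec_eq {e w : ι → R} (he : e ⬝ᵥ e = 1) (hwe : w ⬝ᵥ e = 0) :
    (1 - vecMulVec (w - e) (w - e)) *ᵥ e = w := by
  rw [one_sub_vecMulVec_self_mulVec, sub_dotProduct, he, hwe, zero_sub, neg_one_smul,
    sub_neg_eq_add, add_sub_cancel]

/-- Exchanges the `i`-th columns of `E` and `W` when the columns of `E` and `W` together are
orthonormal. -/
def householderSwap (E W : Matrix ι κ R) (i : κ) : Matrix ι ι R :=
  1 - vecMulVec (Wᵀ i - Eᵀ i) (Wᵀ i - Eᵀ i)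

variable [DecidableEq κ] {E W : Matrix ι κ R}

theorem householderSwap_mulVec_col_self (hE : Eᵀ * E = 1) (hWE : Wᵀ * E = 0) (j : κ) :
    householderSwap E W j *ᵥ Eᵀ j = Wᵀ j :=
  one_sub_vecMulVec_sub_mulVec_eq (by rw [transpose_dotProduct_transpose, hE, one_apply_eq])
    (by rw [transpose_dotProduct_transpose, hWE, zero_apply])

theorem list_prod_map_householderSwap_mulVec_col_of_not_mem (hE : Eᵀ * E = 1)
    (hWE : Wᵀ * E = 0) {L : List κ} {j : κ} (hj : j ∉ L) :
    (L.map (householderSwap E W)).prod *ᵥ Eᵀ j = Eᵀ j := by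
  induction L with
  | nil => simp
  | cons a L ih =>
    rw [List.mem_cons, not_or] at hj
    obtain ⟨hja, hjL⟩ := hj
    rw [List.map_cons, List.prod_cons, ← mulVec_mulVec, ih hjL]
    apply one_sub_vecMulVec_self_mulVec_of_dotProduct_eq_zero
    rw [sub_dotProduct, transpose_dotProduct_transpose, transpose_dotProduct_transpose, hE, hWE,
      one_apply_ne (Ne.symm hja), zero_apply, sub_zero]

theorem list_prod_map_householderSwap_mulVec_col_of_mem (hE : Eᵀ * E = 1) (hWE : Wᵀ * E = 0)
    (hW : (Wᵀ * W).IsDiag) {L : List κ} (hL : L.Nodup) {j : κ} (hj : j ∈ L) :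
    (L.map (householderSwap E W)).prod *ᵥ Eᵀ j = Wᵀ j := by
  induction L with
  | nil => simp at hj
  | cons a L ih =>
    obtain ⟨haL, hL⟩ := List.nodup_cons.mp hL
    rw [List.map_cons, List.prod_cons, ← mulVec_mulVec]
    by_cases haj : a = j
    · subst haj
      rw [list_prod_map_householderSwap_mulVec_col_of_not_mem hE hWE haL,
        householderSwap_mulVec_col_self hE hWE]
    · rw [ih hL ((List.mem_cons.mp hj).resolve_left (Ne.symm haj))]
      apply one_sub_vecMulVec_self_mulVec_of_dotProduct_eq_zero
      rw [sub_dotProduct, dotProduct_comm (Eᵀ a), transpose_dotProduct_transpose,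
        transpose_dotProduct_transpose, hW haj, hWE, zero_apply, sub_zero]

theorem list_prod_map_householderSwap_mul_mul [Fintype κ] (hE : Eᵀ * E = 1) (hWE : Wᵀ * E = 0)
    (hW : (Wᵀ * W).IsDiag) {L : List κ} (hL : L.Nodup) {M : Matrix κ ν R}
    (hM : ∀ j ∉ L, M j = 0) :
    (L.map (householderSwap E W)).prod * (E * M) = W * M := by
  rw [← Matrix.mul_assoc]
  refine mul_eq_mul_of_col_eq_or_row_eq_zero fun j => ?_
  by_cases hj : j ∈ L
  · exact .inl (list_prod_map_householderSwap_mulVec_col_of_mem hE hWE hW hL hj)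
  · exact .inr (hM j hj)

end Matrix

/-- Exact-arithmetic Lanczos bidiagonalization as Householder transformations:
`[[0],[AV_k]] = P̂₁⋯P̂_{k+1}·[[B_k],[0]]` where `P̂_i = I − p̂_ip̂_iᵀ`,
`p̂_i = (−e_i^{(n+1)}; u_i)`, `V_k` and `B_k` are the leading `k` columns of
`V_n` and `B_n`. -/
theorem stmt9 {m n k : ℕ} (hk : k ≤ n)
    (A : Matrix (Fin m) (Fin n) ℝ)
    (U : Matrix (Fin m) (Fin (n + 1)) ℝ) (hU : Uᵀ * U = 1)
    (V : Matrix (Fin n) (Fin n) ℝ)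
    (B : Matrix (Fin (n + 1)) (Fin n) ℝ)
    (hB : ∀ (i : Fin (n + 1)) (j : Fin n), (i : ℕ) ≠ (j : ℕ) → (i : ℕ) ≠ (j : ℕ) + 1 → B i j = 0)
    (hAV : A * V = U * B)
    (p : Fin (n + 1) → (Fin (n + 1) ⊕ Fin m → ℝ))
    (hp : ∀ i, p i = Sum.elim (-(Pi.single i 1)) (fun r => U r i))
    (P : Fin (n + 1) → Matrix (Fin (n + 1) ⊕ Fin m) (Fin (n + 1) ⊕ Fin m) ℝ)
    (hP : ∀ i, P i = 1 - Matrix.vecMulVec (p i) (p i)) :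
    Matrix.fromRows (0 : Matrix (Fin (n + 1)) (Fin k) ℝ)
        (A * V.submatrix id (Fin.castLE hk)) =
      ((List.finRange (k + 1)).map
          (fun j => P (Fin.castLE (by omega) j))).prod *
        Matrix.fromRows (B.submatrix id (Fin.castLE hk))
          (0 : Matrix (Fin m) (Fin k) ℝ) := by
  set E : Matrix (Fin (n + 1) ⊕ Fin m) (Fin (n + 1)) ℝ := fromRows 1 0
  set W : Matrix (Fin (n + 1) ⊕ Fin m) (Fin (n + 1)) ℝ := fromRows 0 U
  set Bk := B.submatrix id (Fin.castLE hk)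
  set L := (List.finRange (k + 1)).map (Fin.castLE (Nat.succ_le_succ hk))
  have hpEW : ∀ i, p i = Wᵀ i - Eᵀ i := fun i => by
    ext (r | r) <;> simp [hp, E, W, Pi.single_apply, one_apply]
  have hprod : (List.finRange (k + 1)).map (fun j => P (Fin.castLE (by omega) j)) =
      L.map (householderSwap E W) := by
    simp only [L, List.map_map, Function.comp_def, hP, hpEW, householderSwap]
  have hBk : ∀ j ∉ L, Bk j = 0 := fun j hj => funext fun c => by
    have hkj : k < j := not_le.mp fun hjk =>
      hj (List.mem_map.mpr ⟨⟨j, by omega⟩, List.mem_finRange _, rfl⟩)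
    apply hB <;> simp only [id, Fin.val_castLE] <;> omega
  have hAVk : A * V.submatrix id (Fin.castLE hk) = U * Bk := by
    ext r c
    exact congrFun (congrFun hAV r) (Fin.castLE hk c)
  rw [hprod, hAVk, show fromRows 0 (U * Bk) = W * Bk by simp [W, fromRows_mul],
    show fromRows Bk 0 = E * Bk by simp [E, fromRows_mul]]
  refine (list_prod_map_householderSwap_mul_mul ?_ ?_ ?_
    ((List.nodup_finRange _).map (Fin.castLE_injective _)) hBk).symm
  all_goals simp [E, W, transpose_fromRows, fromCols_mul_fromRows, hU]
end

section
/- Let P ∈ ℝ^{(n+1+m)×(n+1+m)} be orthogonal with block partition P = [[P₁₁, P₁₂],[P₂₁, P₂₂]] where P₁₁ ∈ ℝ^{(n+1)×(n+1)} and P₂₁ ∈ ℝ^{m×(n+1)}. Then P₁₁ᵀP₁₁ + P₂₁ᵀP₂₁ = I_{n+1}, and if P₂₁ = Y₁ΣZᵀ is a compact SVD (Y₁ ∈ ℝ^{m×(n+1)} orthonormal columns, Z orthogonal, Σ diagonal with entries in [0,1]), then the orthonormal matrix Ū = Y₁Zᵀ satisfies ‖Ū − P₂₁‖₂ ≤ ‖P₁₁‖₂².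 -/
/-!
Write `A = P₁₁`, `B = P₂₁ = Y₁ΣZᵀ`. The first block column of `PᵀP = I` gives `AᵀA + BᵀB = I`,
so `Zᵀ(AᵀA)Z = I − Σ²`. Now `Ū − B = Y₁(I − Σ)Zᵀ`, and `0 ≤ 1 − σᵢ ≤ 1 − σᵢ²` for `σᵢ ∈ [0, 1]`,
so `‖Ū − B‖ ≤ ‖I − Σ‖ ≤ ‖I − Σ²‖ ≤ ‖AᵀA‖ = ‖A‖²`.
-/

open scoped Matrix.Norms.L2Operator
open Matrix

namespace Matrix

variable {k l m n o : Type*}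

theorem toBlocks₁₁_transpose_mul_self [Fintype l] [Fintype m] {α : Type*}
    [NonUnitalNonAssocSemiring α] (P : Matrix (l ⊕ m) (n ⊕ o) α) :
    (Pᵀ * P).toBlocks₁₁ = P.toBlocks₁₁ᵀ * P.toBlocks₁₁ + P.toBlocks₂₁ᵀ * P.toBlocks₂₁ := by
  conv_lhs => rw [← fromBlocks_toBlocks P, fromBlocks_transpose, fromBlocks_multiply]
  rfl

theorem toBlocks₁₁_one [DecidableEq n] [DecidableEq o] {α : Type*} [Zero α] [One α] :
    (1 : Matrix (n ⊕ o) (n ⊕ o) α).toBlocks₁₁ = 1 := by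
  rw [← fromBlocks_one, toBlocks_fromBlocks₁₁]

theorem diagonal_one_sub [DecidableEq n] {α : Type*} [AddGroupWithOne α] (v : n → α) :
    diagonal (1 - v) = 1 - diagonal v := by
  rw [← diagonal_one', diagonal_sub]
  rfl

theorem gram_conj_eq_one_sub_diagonal_sq [Fintype k] [Fintype m] [Fintype n] [DecidableEq n]
    {R : Type*} [CommRing R] {A : Matrix m n R} {B Y : Matrix k n R} {Z : Matrix n n R}
    {σ : n → R} (hAB : Aᵀ * A + Bᵀ * B = 1) (hB : B = Y * diagonal σ * Zᵀ)
    (hY : Yᵀ * Y = 1) (hZ : Zᵀ * Z = 1) :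
    Zᵀ * (Aᵀ * A) * Z = diagonal (1 - σ ^ 2) := by
  have hBB : Bᵀ * B = Z * diagonal (σ ^ 2) * Zᵀ := by
    rw [hB, ← diagonal_pow, pow_two]
    simp only [transpose_mul, transpose_transpose, diagonal_transpose, Matrix.mul_assoc]
    rw [← Matrix.mul_assoc Yᵀ Y, hY, Matrix.one_mul]
  rw [eq_sub_of_add_eq hAB, hBB, Matrix.mul_sub, Matrix.sub_mul, Matrix.mul_one, hZ,
    ← Matrix.mul_assoc, ← Matrix.mul_assoc, hZ, Matrix.one_mul, Matrix.mul_assoc, hZ,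
    Matrix.mul_one, diagonal_one_sub]

section L2

variable {𝕜 : Type*} [RCLike 𝕜] [Fintype l] [Fintype m] [Fintype n] [Fintype o]

theorem l2_opNorm_le_one_of_conjTranspose_mul_self_eq_one [DecidableEq n] {A : Matrix m n 𝕜}
    (hA : Aᴴ * A = 1) : ‖A‖ ≤ 1 := by
  have h : ‖A‖ * ‖A‖ ≤ 1 := by
    rw [← l2_opNorm_conjTranspose_mul_self, hA, ← diagonal_one, l2_opNorm_diagonal]
    exact pi_norm_le_iff_of_nonneg zero_le_one |>.mpr fun _ => by simp
  nlinarith [norm_nonneg A]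

theorem l2_opNorm_mul_mul_le [DecidableEq m] [DecidableEq n] [DecidableEq o]
    {U : Matrix l m 𝕜} {M : Matrix m n 𝕜} {V : Matrix n o 𝕜}
    (hU : ‖U‖ ≤ 1) (hV : ‖V‖ ≤ 1) : ‖U * M * V‖ ≤ ‖M‖ :=
  calc ‖U * M * V‖ ≤ ‖U‖ * ‖M‖ * ‖V‖ :=
        (l2_opNorm_mul _ _).trans <| by gcongr; exact l2_opNorm_mul _ _
    _ ≤ 1 * ‖M‖ * 1 := by gcongr
    _ = ‖M‖ := by ring

theorem l2_opNorm_diagonal_le_of_norm_le [DecidableEq n] {v w : n → 𝕜}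
    (h : ∀ i, ‖v i‖ ≤ ‖w i‖) :
    ‖(diagonal v : Matrix n n 𝕜)‖ ≤ ‖(diagonal w : Matrix n n 𝕜)‖ := by
  rw [l2_opNorm_diagonal, l2_opNorm_diagonal]
  exact pi_norm_le_iff_of_nonneg (norm_nonneg w) |>.mpr fun i =>
    (h i).trans (norm_le_pi_norm w i)

end L2

end Matrix

theorem stmt10_general {m n : ℕ}
    (P : Matrix (Fin (n + 1) ⊕ Fin m) (Fin (n + 1) ⊕ Fin m) ℝ) (hP : Pᵀ * P = 1)
    (Y₁ : Matrix (Fin m) (Fin (n + 1)) ℝ) (hY : Y₁ᵀ * Y₁ = 1)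
    (Z : Matrix (Fin (n + 1)) (Fin (n + 1)) ℝ) (hZ : Zᵀ * Z = 1)
    (σ : Fin (n + 1) → ℝ) (hσ : ∀ i, 0 ≤ σ i ∧ σ i ≤ 1)
    (hSVD : P.toBlocks₂₁ = Y₁ * Matrix.diagonal σ * Zᵀ) :
    P.toBlocks₁₁ᵀ * P.toBlocks₁₁ + P.toBlocks₂₁ᵀ * P.toBlocks₂₁ = 1 ∧
    ‖Y₁ * Zᵀ - P.toBlocks₂₁‖ ≤ ‖P.toBlocks₁₁‖ ^ 2 := by
  set A := P.toBlocks₁₁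
  have hAB : Aᵀ * A + P.toBlocks₂₁ᵀ * P.toBlocks₂₁ = 1 := by
    rw [← toBlocks₁₁_transpose_mul_self, hP, toBlocks₁₁_one]
  refine ⟨hAB, ?_⟩
  have hYn : ‖Y₁‖ ≤ 1 := l2_opNorm_le_one_of_conjTranspose_mul_self_eq_one hY
  have hZn : ‖Z‖ ≤ 1 := l2_opNorm_le_one_of_conjTranspose_mul_self_eq_one hZ
  have hZt : ‖Zᵀ‖ ≤ 1 := l2_opNorm_le_one_of_conjTranspose_mul_self_eq_one <| by
    simpa using mul_eq_one_comm.mp hZ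
  have hdiff : Y₁ * Zᵀ - P.toBlocks₂₁ = Y₁ * diagonal (1 - σ) * Zᵀ := by
    rw [hSVD, diagonal_one_sub, Matrix.mul_sub, Matrix.mul_one, Matrix.sub_mul]
  have hentry : ∀ i, ‖1 - σ i‖ ≤ ‖1 - σ i ^ 2‖ := fun i => by
    obtain ⟨h0, h1⟩ := hσ i
    rw [Real.norm_eq_abs, Real.norm_eq_abs, abs_of_nonneg (by linarith),
      abs_of_nonneg (by nlinarith)]
    nlinarith
  calc ‖Y₁ * Zᵀ - P.toBlocks₂₁‖ ≤ ‖(diagonal (1 - σ) : Matrix (Fin (n + 1)) _ ℝ)‖ := by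
        rw [hdiff]; exact l2_opNorm_mul_mul_le hYn hZt
    _ ≤ ‖(diagonal (1 - σ ^ 2) : Matrix (Fin (n + 1)) _ ℝ)‖ :=
        l2_opNorm_diagonal_le_of_norm_le (v := 1 - σ) (w := 1 - σ ^ 2) hentry
    _ = ‖Zᵀ * (Aᵀ * A) * Z‖ := by rw [gram_conj_eq_one_sub_diagonal_sq hAB hSVD hY hZ]
    _ ≤ ‖Aᴴ * A‖ := l2_opNorm_mul_mul_le hZt hZn
    _ = ‖A‖ ^ 2 := by rw [l2_opNorm_conjTranspose_mul_self, sq]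

/-- For an orthogonal matrix `P` with blocks `P₁₁, P₂₁`, one has
`P₁₁ᵀP₁₁ + P₂₁ᵀP₂₁ = I`, and if `P₂₁ = Y₁ΣZᵀ` is a compact SVD then the
orthonormal matrix `Ū = Y₁Zᵀ` satisfies `‖Ū − P₂₁‖₂ ≤ ‖P₁₁‖₂²`. -/
theorem stmt10 {m n : ℕ} (hmn : n + 1 ≤ m)
    (P : Matrix (Fin (n + 1) ⊕ Fin m) (Fin (n + 1) ⊕ Fin m) ℝ) (hP : Pᵀ * P = 1)
    (Y₁ : Matrix (Fin m) (Fin (n + 1)) ℝ) (hY : Y₁ᵀ * Y₁ = 1)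
    (Z : Matrix (Fin (n + 1)) (Fin (n + 1)) ℝ) (hZ : Zᵀ * Z = 1)
    (σ : Fin (n + 1) → ℝ) (hσ : ∀ i, 0 ≤ σ i ∧ σ i ≤ 1)
    (hSVD : P.toBlocks₂₁ = Y₁ * Matrix.diagonal σ * Zᵀ) :
    P.toBlocks₁₁ᵀ * P.toBlocks₁₁ + P.toBlocks₂₁ᵀ * P.toBlocks₂₁ = 1 ∧
    ‖Y₁ * Zᵀ - P.toBlocks₂₁‖ ≤ ‖P.toBlocks₁₁‖ ^ 2 :=
  stmt10_general P hP Y₁ hY Z hZ σ hσ hSVD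
end
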